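/- Let G be a connected finite weighted graph with positive edge weights, and let u and v be two vertices of G satisfying: (1) the shortest u-v path P = (u = v_0, v_1, ..., v_k = v) in G is unique; (2) for every vertex x of G there is a unique vertex v_i on P with d_G(x, v_i) = d_G(x, V(P)); and (3) with V_i = {x ∈ V(G) : d_G(x, v_i) = d_G(x, V(P))}, whenever e = xy is an edge of G with x ∈ V_i and y ∈ V_j, one has w(e) ≥ d_G(v_i, v_j) and |d_G(v_i, x) − d_G(v_j, y)| ≤ w(e) − d_G(v_i, v_j). Then G has a spanning tree T that is a common distance-preserving spanning tree of u and v. -/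

import Mathlib

/-!
Let `n x` be a nearest vertex of `P` to `x`. The lower half of the second inequality in (3)
says that every edge `xy` satisfies `d(n x, n y) + d(n y, y) ≤ w(xy) + d(n x, x)`; telescoping
this along a shortest walk gives `d(s, x) = d(s, n x) + d(n x, x)` for every vertex `s` of `P`.
Hang every vertex of `P` other than `u` on its predecessor along `P`, and every other vertex
`x` on its predecessor `y` along a shortest path from `n x`; then `n y = n x`, so the splitting
makes this a shortest-path tree from `u`. In it the route from `x` to `v` climbs to `n x` and
then follows `P`, with length `d(n x, x) + d(n x, v) = d(v, x)`.
-/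

open SimpleGraph

/-- The weighted length of a walk: the sum of the weights of its edges. -/
def SimpleGraph.Walk.wlength {V : Type*} {G : SimpleGraph V} (w : V → V → ℝ) {x y : V}
    (p : G.Walk x y) : ℝ :=
  (p.darts.map fun d => w d.toProd.1 d.toProd.2).sum

/-- The weighted distance between two vertices: the minimum weighted length of a walk. -/
noncomputable def SimpleGraph.wdist {V : Type*} (G : SimpleGraph V) (w : V → V → ℝ)
    (x y : V) : ℝ :=
  sInf {r : ℝ | ∃ p : G.Walk x y, p.wlength w = r}

/-- The weighted distance from a vertex to a set of vertices. -/
noncomputable def SimpleGraph.wdistS {V : Type*} (G : SimpleGraph V) (w : V → V → ℝ)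
    (x : V) (S : Set V) : ℝ :=
  sInf (G.wdist w x '' S)

/-- `Vset G w P i` is the set of vertices whose nearest vertex on the walk `P` is `P.getVert i`,
i.e. `V_i = {x : d_G(x, v_i) = d_G(x, V(P))}`. -/
def Vset {V : Type*} (G : SimpleGraph V) (w : V → V → ℝ) {u v : V} (P : G.Walk u v)
    (i : ℕ) : Set V :=
  {x : V | G.wdist w x (P.getVert i) = G.wdistS w x {z | z ∈ P.support}}

lemma Function.exists_iterate_eq_of_apply_lt {α : Type*} [Finite α] {f : α → α} {ρ : α → ℝ}
    {r : α} (hlt : ∀ x, x ≠ r → ρ (f x) < ρ x) (x : α) : ∃ k, f^[k] x = r := by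
  by_contra! h
  have hanti : StrictAnti fun k => ρ (f^[k] x) := strictAnti_nat_of_succ_lt fun k => by
    rw [Function.iterate_succ_apply']
    exact hlt _ (h k)
  exact not_injective_infinite_finite _ hanti.injective.of_comp

lemma Function.exists_iterate_eq_of_retraction {α : Type*} {S : Set α} {f n : α → α}
    (hf : ∀ x, x ∉ S → n (f x) = n x) (hn : ∀ z ∈ S, n z = z) {x : α}
    (h : ∃ k, f^[k] x ∈ S) : ∃ k, f^[k] x = n x := by
  classical
  have hinv : ∀ j ≤ Nat.find h, n (f^[j] x) = n x := by
    intro j hj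
    induction j with
    | zero => rfl
    | succ j ih =>
      rw [Function.iterate_succ_apply', hf _ (Nat.find_min h (by omega)), ih (by omega)]
  exact ⟨Nat.find h, (hn _ (Nat.find_spec h)).symm.trans (hinv _ le_rfl)⟩

namespace SimpleGraph

variable {V : Type*} {G : SimpleGraph V} {w : V → V → ℝ}

namespace Walk

@[simp]
lemma wlength_nil {x : V} : (nil : G.Walk x x).wlength w = 0 := rfl

@[simp]
lemma wlength_cons {x y z : V} (h : G.Adj x y) (p : G.Walk y z) :
    (cons h p).wlength w = w x y + p.wlength w := by
  simp [wlength]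

@[simp]
lemma wlength_append {x y z : V} (p : G.Walk x y) (q : G.Walk y z) :
    (p.append q).wlength w = p.wlength w + q.wlength w := by
  simp [wlength]

lemma wlength_concat {x y z : V} (p : G.Walk x y) (h : G.Adj y z) :
    (p.concat h).wlength w = p.wlength w + w y z := by
  simp [concat_eq_append]

lemma wlength_reverse (hsymm : ∀ a b, w a b = w b a) {x y : V} (p : G.Walk x y) :
    p.reverse.wlength w = p.wlength w := by
  induction p with
  | nil => rfl
  | cons h p ih => simp [ih, hsymm, add_comm]

@[simp]
lemma wlength_mapLe {G' : SimpleGraph V} (hle : G ≤ G') {x y : V} (p : G.Walk x y) :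
    (p.mapLe hle).wlength w = p.wlength w := by
  induction p with
  | nil => rfl
  | cons h p ih => simpa [mapLe] using ih

lemma wlength_nonneg (hw : ∀ a b, G.Adj a b → 0 ≤ w a b) {x y : V} (p : G.Walk x y) :
    0 ≤ p.wlength w :=
  List.sum_nonneg (by simpa using fun d _ => hw _ _ d.adj)

lemma wlength_bypass_le [DecidableEq V] (hw : ∀ a b, G.Adj a b → 0 ≤ w a b) {x y : V}
    (p : G.Walk x y) : p.bypass.wlength w ≤ p.wlength w := by
  obtain ⟨l, hperm, hsub⟩ := List.subperm_of_subset
    (p.bypass_isPath.isTrail.edges_nodup.of_map _) p.darts_bypass_subset_darts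
  rw [wlength, wlength, ← (hperm.map _).sum_eq]
  exact (hsub.map _).sum_le_sum (by simpa using fun d _ => hw _ _ d.adj)

lemma wlength_take_add_wlength_drop {x y : V} (p : G.Walk x y) (n : ℕ) :
    (p.take n).wlength w + (p.drop n).wlength w = p.wlength w := by
  simp only [wlength, darts_take, darts_drop, ← List.sum_append, ← List.map_append,
    List.take_append_drop]

end Walk

open Walk

lemma wdist_le_wlength (hw : ∀ a b, G.Adj a b → 0 ≤ w a b) {x y : V} (p : G.Walk x y) :
    G.wdist w x y ≤ p.wlength w :=
  csInf_le ⟨0, by rintro _ ⟨q, rfl⟩; exact wlength_nonneg hw q⟩ ⟨p, rfl⟩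

lemma wdist_nonneg (hw : ∀ a b, G.Adj a b → 0 ≤ w a b) (x y : V) : 0 ≤ G.wdist w x y :=
  Real.sInf_nonneg <| by rintro _ ⟨q, rfl⟩; exact wlength_nonneg hw q

lemma wdist_self (hw : ∀ a b, G.Adj a b → 0 ≤ w a b) (x : V) : G.wdist w x x = 0 :=
  (wdist_le_wlength hw nil).antisymm (wdist_nonneg hw x x)

lemma wdist_comm (hsymm : ∀ a b, w a b = w b a) (x y : V) : G.wdist w x y = G.wdist w y x := by
  have h : ∀ a b : V,
      {r | ∃ p : G.Walk a b, p.wlength w = r} ⊆ {r | ∃ p : G.Walk b a, p.wlength w = r} :=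
    fun a b _ ⟨p, hp⟩ => ⟨p.reverse, (wlength_reverse hsymm p).trans hp⟩
  exact congrArg sInf ((h x y).antisymm (h y x))

lemma wdist_le_of_adj (hw : ∀ a b, G.Adj a b → 0 ≤ w a b) {x y : V} (h : G.Adj x y) :
    G.wdist w x y ≤ w x y := by
  simpa using wdist_le_wlength hw (cons h nil)

lemma wdist_triangle (hw : ∀ a b, G.Adj a b → 0 ≤ w a b) {x y z : V}
    (hxy : G.Reachable x y) (hyz : G.Reachable y z) :
    G.wdist w x z ≤ G.wdist w x y + G.wdist w y z := by
  have h₁ (q : G.Walk y z) : G.wdist w x z - q.wlength w ≤ G.wdist w x y :=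
    le_csInf (hxy.elim fun p => ⟨_, p, rfl⟩) fun _ ⟨p, hp⟩ => by
      linarith [wdist_le_wlength hw (p.append q), wlength_append (w := w) p q]
  have h₂ : G.wdist w x z - G.wdist w x y ≤ G.wdist w y z :=
    le_csInf (hyz.elim fun q => ⟨_, q, rfl⟩) fun _ ⟨q, hq⟩ => by linarith [h₁ q]
  linarith

lemma exists_isPath_wlength_eq_wdist [Finite V] (hw : ∀ a b, G.Adj a b → 0 ≤ w a b) {x y : V}
    (h : G.Reachable x y) : ∃ p : G.Walk x y, p.IsPath ∧ p.wlength w = G.wdist w x y := by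
  classical
  have := Fintype.ofFinite V
  obtain ⟨p, -, hp⟩ := Finset.univ.exists_min_image (fun p : G.Path x y => p.1.wlength w)
    ⟨⟨h.some.bypass, h.some.bypass_isPath⟩, Finset.mem_univ _⟩
  refine ⟨p.1, p.2, (wdist_le_wlength hw _).antisymm' (le_csInf ⟨_, p.1, rfl⟩ ?_)⟩
  rintro _ ⟨q, rfl⟩
  exact (hp ⟨q.bypass, q.bypass_isPath⟩ (Finset.mem_univ _)).trans (wlength_bypass_le hw q)

lemma eq_of_wdist_eq_zero [Finite V] (hpos : ∀ a b, G.Adj a b → 0 < w a b) {x y : V}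
    (h : G.Reachable x y) (hxy : G.wdist w x y = 0) : x = y := by
  have hw a b (hab : G.Adj a b) := (hpos a b hab).le
  obtain ⟨p, -, hp⟩ := exists_isPath_wlength_eq_wdist hw h
  cases p with
  | nil => rfl
  | cons hadj q => linarith [hpos _ _ hadj, wlength_nonneg hw q, wlength_cons (w := w) hadj q]

lemma wdistS_le_wdist (hw : ∀ a b, G.Adj a b → 0 ≤ w a b) {S : Set V} (x : V) {z : V}
    (hz : z ∈ S) : G.wdistS w x S ≤ G.wdist w x z :=
  csInf_le ⟨0, by rintro _ ⟨y, -, rfl⟩; exact wdist_nonneg hw x y⟩ ⟨z, hz, rfl⟩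

lemma wdist_eq_of_walk {T : SimpleGraph V} (hle : T ≤ G) (hw : ∀ a b, G.Adj a b → 0 ≤ w a b)
    {x y : V} (W : T.Walk x y) (hW : W.wlength w = G.wdist w x y) :
    T.wdist w x y = G.wdist w x y := by
  refine (hW ▸ wdist_le_wlength (fun a b h => hw a b (hle h)) W).antisymm
    (le_csInf ⟨_, W, rfl⟩ ?_)
  rintro _ ⟨q, rfl⟩
  simpa using wdist_le_wlength hw (q.mapLe hle)

lemma wdist_add_wdist_getVert (hw : ∀ a b, G.Adj a b → 0 ≤ w a b) {u v : V} {p : G.Walk u v}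
    (hp : p.wlength w = G.wdist w u v) (n : ℕ) :
    G.wdist w u (p.getVert n) + G.wdist w (p.getVert n) v = G.wdist w u v := by
  refine le_antisymm ?_ (wdist_triangle hw (p.take n).reachable (p.drop n).reachable)
  linarith [wlength_take_add_wlength_drop (w := w) p n, wdist_le_wlength hw (p.take n),
    wdist_le_wlength hw (p.drop n)]

lemma wlength_take_eq_wdist (hw : ∀ a b, G.Adj a b → 0 ≤ w a b) {u v : V} {p : G.Walk u v}
    (hp : p.wlength w = G.wdist w u v) (n : ℕ) :
    (p.take n).wlength w = G.wdist w u (p.getVert n) := by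
  linarith [wlength_take_add_wlength_drop (w := w) p n, wdist_le_wlength hw (p.take n),
    wdist_le_wlength hw (p.drop n), wdist_add_wdist_getVert hw hp n]

lemma wdist_penultimate_add (hw : ∀ a b, G.Adj a b → 0 ≤ w a b) {s x : V} {p : G.Walk s x}
    (hp : p.wlength w = G.wdist w s x) (hnil : ¬p.Nil) :
    G.wdist w s p.penultimate + w p.penultimate x = G.wdist w s x := by
  have hadj := p.adj_penultimate hnil
  have hsplit := wlength_concat (w := w) p.dropLast hadj
  rw [concat_dropLast] at hsplit
  have := wdist_triangle hw p.dropLast.reachable hadj.reachable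
  linarith [wdist_le_wlength hw p.dropLast, wdist_le_of_adj hw hadj]

lemma wdist_getVert_succ (hw : ∀ a b, G.Adj a b → 0 ≤ w a b) {u v : V} {p : G.Walk u v}
    (hp : p.wlength w = G.wdist w u v) {i : ℕ} (hi : i < p.length) :
    G.wdist w u (p.getVert i) + w (p.getVert i) (p.getVert (i + 1)) =
      G.wdist w u (p.getVert (i + 1)) := by
  have hpen : (p.take (i + 1)).penultimate = p.getVert i := by
    simp [penultimate, min_eq_left (Nat.succ_le_of_lt hi)]
  have hnil : ¬(p.take (i + 1)).Nil := by
    simpa [nil_take_iff, not_nil_iff_lt_length] using Nat.zero_lt_of_lt hi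
  rw [← hpen]
  exact wdist_penultimate_add hw (wlength_take_eq_wdist hw hp _) hnil

def fromParent (r : V) (par : V → V) : SimpleGraph V :=
  fromRel fun x y => x ≠ r ∧ par x = y

section fromParent

variable {r : V} {par : V → V}

lemma fromParent_adj (hadj : ∀ x, x ≠ r → G.Adj x (par x)) {x : V} (hx : x ≠ r) :
    (fromParent r par).Adj x (par x) :=
  (fromRel_adj _ _ _).mpr ⟨(hadj x hx).ne, .inl ⟨hx, rfl⟩⟩

lemma fromParent_le (hadj : ∀ x, x ≠ r → G.Adj x (par x)) : fromParent r par ≤ G := by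
  intro x y hxy
  obtain ⟨-, ⟨hx, rfl⟩ | ⟨hy, rfl⟩⟩ := (fromRel_adj _ _ _).mp hxy
  exacts [hadj x hx, (hadj y hy).symm]

lemma card_edgeSet_fromParent_add_one_le [Finite V] :
    Nat.card (fromParent r par).edgeSet + 1 ≤ Nat.card V := by
  have hsub : (fromParent r par).edgeSet ⊆ (fun x => s(x, par x)) '' {r}ᶜ := by
    rintro ⟨x, y⟩ hxy
    obtain ⟨-, ⟨hx, rfl⟩ | ⟨hy, rfl⟩⟩ := (fromRel_adj _ _ _).mp ((mem_edgeSet _).mp hxy)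
    exacts [⟨x, hx, rfl⟩, ⟨y, hy, Sym2.eq_swap⟩]
  rw [Nat.card_coe_set_eq]
  calc (fromParent r par).edgeSet.ncard + 1 ≤ ({r}ᶜ : Set V).ncard + 1 := by
        gcongr; exact (Set.ncard_le_ncard hsub).trans (Set.ncard_image_le (Set.toFinite _))
    _ = Nat.card V := by simpa using Set.ncard_compl_add_ncard {r}

variable {ρ : V → ℝ}

lemma exists_walk_fromParent_of_iterate_eq (hr : par r = r)
    (hadj : ∀ x, x ≠ r → G.Adj x (par x)) (hρ : ∀ x, x ≠ r → ρ (par x) + w x (par x) = ρ x)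
    {k : ℕ} {x y : V} (hk : par^[k] x = y) :
    ∃ W : (fromParent r par).Walk x y, W.wlength w = ρ x - ρ y := by
  subst hk
  induction k generalizing x with
  | zero => exact ⟨nil, by simp⟩
  | succ k ih =>
    rw [Function.iterate_succ_apply]
    by_cases hx : x = r
    · subst hx
      rw [hr]
      exact ih
    · obtain ⟨W, hW⟩ := ih (x := par x)
      exact ⟨cons (fromParent_adj hadj hx) W, by rw [wlength_cons, hW, ← hρ x hx]; ring⟩

lemma exists_iterate_fromParent_eq_root [Finite V] (hpos : ∀ a b, G.Adj a b → 0 < w a b)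
    (hadj : ∀ x, x ≠ r → G.Adj x (par x)) (hρ : ∀ x, x ≠ r → ρ (par x) + w x (par x) = ρ x)
    (x : V) : ∃ k, par^[k] x = r :=
  Function.exists_iterate_eq_of_apply_lt
    (fun x hx => by linarith [hρ x hx, hpos _ _ (hadj x hx)]) x

lemma fromParent_isTree [Finite V] (hpos : ∀ a b, G.Adj a b → 0 < w a b) (hr : par r = r)
    (hadj : ∀ x, x ≠ r → G.Adj x (par x)) (hρ : ∀ x, x ≠ r → ρ (par x) + w x (par x) = ρ x) :
    (fromParent r par).IsTree := by
  have hreach (x : V) : (fromParent r par).Reachable x r := by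
    obtain ⟨k, hk⟩ := exists_iterate_fromParent_eq_root hpos hadj hρ x
    exact (exists_walk_fromParent_of_iterate_eq hr hadj hρ hk).elim fun W _ => W.reachable
  have hconn : (fromParent r par).Connected :=
    (connected_iff_exists_forall_reachable _).mpr ⟨r, fun x => (hreach x).symm⟩
  exact isTree_iff_connected_and_card.mpr ⟨hconn,
    card_edgeSet_fromParent_add_one_le.antisymm hconn.card_vert_le_card_edgeSet_add_one⟩

lemma wdist_fromParent_root [Finite V] (hsymm : ∀ a b, w a b = w b a)
    (hpos : ∀ a b, G.Adj a b → 0 < w a b) (hr : par r = r)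
    (hadj : ∀ x, x ≠ r → G.Adj x (par x))
    (hρ : ∀ x, x ≠ r → G.wdist w r (par x) + w x (par x) = G.wdist w r x) (x : V) :
    (fromParent r par).wdist w r x = G.wdist w r x := by
  have hw a b (hab : G.Adj a b) := (hpos a b hab).le
  obtain ⟨k, hk⟩ := exists_iterate_fromParent_eq_root hpos hadj hρ x
  obtain ⟨W, hW⟩ := exists_walk_fromParent_of_iterate_eq hr hadj hρ hk
  refine wdist_eq_of_walk (fromParent_le hadj) hw W.reverse ?_
  rw [wlength_reverse hsymm, hW, wdist_self hw, sub_zero]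

end fromParent

lemma Walk.IsPath.exists_parent {u v : V} {P : G.Walk u v} (hP : P.IsPath)
    {Q : V → V → Prop} (hQ : ∀ x, x ∉ P.support → ∃ y, Q x y) :
    ∃ par : V → V, par u = u ∧ (∀ i < P.length, par (P.getVert (i + 1)) = P.getVert i) ∧
      ∀ x, x ∉ P.support → Q x (par x) := by
  classical
  choose f hf using hQ
  refine ⟨fun x => if h : ∃ i < P.length, P.getVert (i + 1) = x then P.getVert h.choose
    else if hx : x ∈ P.support then x else f x hx, ?_, fun i hi => ?_, fun x hx => ?_⟩
  · have hu : ¬∃ i < P.length, P.getVert (i + 1) = u := fun ⟨i, hi, h⟩ => by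
      have := hP.getVert_injOn hi (Nat.zero_le _) (h.trans P.getVert_zero.symm)
      omega
    simp only [dif_neg hu, dif_pos P.start_mem_support]
  · have h : ∃ j < P.length, P.getVert (j + 1) = P.getVert (i + 1) := ⟨i, hi, rfl⟩
    obtain ⟨hlt, heq⟩ := h.choose_spec
    have := hP.getVert_injOn hlt hi heq
    simp only [dif_pos h]
    congr 1
    omega
  · have hx' : ¬∃ i < P.length, P.getVert (i + 1) = x :=
      fun ⟨i, _, h⟩ => hx (h ▸ P.getVert_mem_support _)
    simpa only [dif_neg hx', dif_neg hx] using hf x hx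

lemma Walk.iterate_getVert_add {u v : V} (p : G.Walk u v) {f : V → V}
    (hf : ∀ i < p.length, f (p.getVert (i + 1)) = p.getVert i) (i j : ℕ)
    (hij : i + j ≤ p.length) : f^[j] (p.getVert (i + j)) = p.getVert i := by
  induction j with
  | zero => rfl
  | succ j ih => rw [Function.iterate_succ_apply, ← add_assoc, hf _ (by omega), ih (by omega)]

section Projection

variable {n : V → V}

lemma wdist_proj_add_le_wlength (hG : G.Connected) (hw : ∀ a b, G.Adj a b → 0 ≤ w a b)
    (hcross : ∀ x y, G.Adj x y →
      G.wdist w (n x) (n y) + G.wdist w (n y) y ≤ w x y + G.wdist w (n x) x)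
    {a b : V} (p : G.Walk a b) :
    G.wdist w (n a) (n b) + G.wdist w (n b) b ≤ p.wlength w + G.wdist w (n a) a := by
  induction p with
  | nil => simp [wdist_self hw]
  | @cons a c b h p ih =>
    rw [wlength_cons]
    linarith [hcross _ _ h, wdist_triangle (w := w) hw (hG.preconnected (n a) (n c))
      (hG.preconnected (n c) (n b))]

lemma wdist_eq_wdist_proj_add [Finite V] (hG : G.Connected) (hw : ∀ a b, G.Adj a b → 0 ≤ w a b)
    (hcross : ∀ x y, G.Adj x y →
      G.wdist w (n x) (n y) + G.wdist w (n y) y ≤ w x y + G.wdist w (n x) x)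
    {s : V} (hs : n s = s) (x : V) :
    G.wdist w s x = G.wdist w s (n x) + G.wdist w (n x) x := by
  obtain ⟨p, -, hp⟩ := exists_isPath_wlength_eq_wdist hw (hG.preconnected s x)
  have := wdist_proj_add_le_wlength hG hw hcross p
  rw [hs, wdist_self hw, hp] at this
  exact (wdist_triangle hw (hG.preconnected _ _) (hG.preconnected _ _)).antisymm (by linarith)

variable {S : Set V}

lemma proj_eq_self [Finite V] (hG : G.Connected) (hpos : ∀ a b, G.Adj a b → 0 < w a b)
    (hn_le : ∀ x, ∀ z ∈ S, G.wdist w (n x) x ≤ G.wdist w z x) {z : V} (hz : z ∈ S) :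
    n z = z := by
  have hw a b (hab : G.Adj a b) := (hpos a b hab).le
  refine eq_of_wdist_eq_zero hpos (hG.preconnected _ _) ((wdist_nonneg hw _ _).antisymm' ?_)
  simpa [wdist_self hw] using hn_le z z hz

lemma exists_adj_proj_eq [Finite V] (hG : G.Connected) (hsymm : ∀ a b, w a b = w b a)
    (hpos : ∀ a b, G.Adj a b → 0 < w a b) (hn_mem : ∀ x, n x ∈ S)
    (hn_le : ∀ x, ∀ z ∈ S, G.wdist w (n x) x ≤ G.wdist w z x)
    (hcross : ∀ x y, G.Adj x y →
      G.wdist w (n x) (n y) + G.wdist w (n y) y ≤ w x y + G.wdist w (n x) x)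
    {x : V} (hx : x ∉ S) :
    ∃ y, G.Adj x y ∧ n y = n x ∧ G.wdist w (n x) y + w x y = G.wdist w (n x) x := by
  have hw a b (hab : G.Adj a b) := (hpos a b hab).le
  obtain ⟨p, -, hp⟩ := exists_isPath_wlength_eq_wdist hw (hG.preconnected (n x) x)
  have hnil : ¬p.Nil := fun h => hx (h.eq ▸ hn_mem x)
  have hadj := p.adj_penultimate hnil
  have hd := wdist_penultimate_add hw hp hnil
  refine ⟨p.penultimate, hadj.symm, ?_, by rwa [hsymm]⟩
  -- crossing the last edge back from `x`, together with `d(n y, y) ≤ d(n x, y)`,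
  -- leaves `d(n y, n x) ≤ 0`
  have := hcross _ _ hadj
  have := hn_le p.penultimate (n x) (hn_mem x)
  exact eq_of_wdist_eq_zero hpos (hG.preconnected _ _)
    ((wdist_nonneg hw _ _).antisymm' (by linarith))

end Projection

variable {u v : V} {P : G.Walk u v} {n : V → V}

lemma exists_parent_of_proj [Finite V] (hG : G.Connected) (hsymm : ∀ a b, w a b = w b a)
    (hpos : ∀ a b, G.Adj a b → 0 < w a b) (hP : P.IsPath)
    (hPshort : P.wlength w = G.wdist w u v) (hn_mem : ∀ x, n x ∈ P.support)
    (hn_le : ∀ x, ∀ z ∈ P.support, G.wdist w (n x) x ≤ G.wdist w z x)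
    (hcross : ∀ x y, G.Adj x y →
      G.wdist w (n x) (n y) + G.wdist w (n y) y ≤ w x y + G.wdist w (n x) x) :
    ∃ par : V → V, par u = u ∧
      (∀ x, x ≠ u → G.Adj x (par x) ∧ G.wdist w u (par x) + w x (par x) = G.wdist w u x) ∧
      (∀ i < P.length, par (P.getVert (i + 1)) = P.getVert i) ∧
      ∀ x, x ∉ P.support → n (par x) = n x := by
  have hw a b (hab : G.Adj a b) := (hpos a b hab).le
  obtain ⟨par, hpar_u, hpar_P, hpar_off⟩ :=
    hP.exists_parent fun x hx => exists_adj_proj_eq hG hsymm hpos hn_mem hn_le hcross hx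
  refine ⟨par, hpar_u, fun x hx => ?_, hpar_P, fun x hx => (hpar_off x hx).2.1⟩
  by_cases hxP : x ∈ P.support
  · obtain ⟨_ | i, rfl, hi⟩ := mem_support_iff_exists_getVert.mp hxP
    · exact absurd P.getVert_zero hx
    · rw [hpar_P i hi, hsymm]
      exact ⟨(P.adj_getVert_succ hi).symm, wdist_getVert_succ hw hPshort hi⟩
  · obtain ⟨hadj, hn, hd⟩ := hpar_off x hxP
    have hu := proj_eq_self hG hpos hn_le P.start_mem_support
    refine ⟨hadj, ?_⟩
    rw [wdist_eq_wdist_proj_add hG hw hcross hu x,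
      wdist_eq_wdist_proj_add hG hw hcross hu (par x), hn]
    linarith

lemma exists_common_dp_tree_of_proj [Finite V] (hG : G.Connected)
    (hsymm : ∀ a b, w a b = w b a) (hpos : ∀ a b, G.Adj a b → 0 < w a b) (hP : P.IsPath)
    (hPshort : P.wlength w = G.wdist w u v) (hn_mem : ∀ x, n x ∈ P.support)
    (hn_le : ∀ x, ∀ z ∈ P.support, G.wdist w (n x) x ≤ G.wdist w z x)
    (hcross : ∀ x y, G.Adj x y →
      G.wdist w (n x) (n y) + G.wdist w (n y) y ≤ w x y + G.wdist w (n x) x) :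
    ∃ T : SimpleGraph V, T ≤ G ∧ T.IsTree ∧
      (∀ x : V, T.wdist w u x = G.wdist w u x) ∧
      (∀ x : V, T.wdist w v x = G.wdist w v x) := by
  have hw a b (hab : G.Adj a b) := (hpos a b hab).le
  obtain ⟨par, hpar_u, hρ, hpar_P, hpar_off⟩ :=
    exists_parent_of_proj hG hsymm hpos hP hPshort hn_mem hn_le hcross
  have hadj x hx := (hρ x hx).1
  replace hρ x hx := (hρ x hx).2
  have hfix z (hz : z ∈ P.support) := proj_eq_self hG hpos hn_le hz
  refine ⟨fromParent u par, fromParent_le hadj, fromParent_isTree hpos hpar_u hadj hρ,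
    wdist_fromParent_root hsymm hpos hpar_u hadj hρ, fun x => ?_⟩
  obtain ⟨k, hk⟩ := Function.exists_iterate_eq_of_retraction (S := {z | z ∈ P.support})
    hpar_off hfix ((exists_iterate_fromParent_eq_root hpos hadj hρ x).imp fun _ hk => by
      rw [Set.mem_ofPred_eq, hk]; exact P.start_mem_support)
  obtain ⟨i, hix, hi⟩ := mem_support_iff_exists_getVert.mp (hn_mem x)
  have hv : par^[P.length - i] v = n x := by
    rw [← hix, ← P.iterate_getVert_add hpar_P i (P.length - i) (by omega),
      Nat.add_sub_cancel' hi, P.getVert_length]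
  obtain ⟨W₁, hW₁⟩ := exists_walk_fromParent_of_iterate_eq hpar_u hadj hρ hk
  obtain ⟨W₂, hW₂⟩ := exists_walk_fromParent_of_iterate_eq hpar_u hadj hρ hv
  refine wdist_eq_of_walk (fromParent_le hadj) hw (W₂.append W₁.reverse) ?_
  have hsplit_u := wdist_eq_wdist_proj_add hG hw hcross (hfix u P.start_mem_support) x
  have hsplit_v := wdist_eq_wdist_proj_add hG hw hcross (hfix v P.end_mem_support) x
  have hPx := wdist_add_wdist_getVert hw hPshort i
  rw [hix] at hPx
  rw [wlength_append, wlength_reverse hsymm, hW₁, hW₂, hsplit_v, wdist_comm hsymm v (n x)]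
  linarith

end SimpleGraph

theorem exists_common_dp_tree_general {V : Type*} [Fintype V] (G : SimpleGraph V)
    (hG : G.Connected) (w : V → V → ℝ) (hsymm : ∀ a b : V, w a b = w b a)
    (hpos : ∀ a b : V, G.Adj a b → 0 < w a b) (u v : V)
    (P : G.Walk u v) (hP : P.IsPath) (hPshort : P.wlength w = G.wdist w u v)
    (hnear : ∀ x : V, ∃! y : V, y ∈ P.support ∧
      G.wdist w x y = G.wdistS w x {z | z ∈ P.support})
    (hedge : ∀ i j : ℕ, i ≤ P.length → j ≤ P.length → ∀ x y : V, G.Adj x y →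
      x ∈ Vset G w P i → y ∈ Vset G w P j →
      w x y ≥ G.wdist w (P.getVert i) (P.getVert j) ∧
        |G.wdist w (P.getVert i) x - G.wdist w (P.getVert j) y| ≤
          w x y - G.wdist w (P.getVert i) (P.getVert j)) :
    ∃ T : SimpleGraph V, T ≤ G ∧ T.IsTree ∧
      (∀ x : V, T.wdist w u x = G.wdist w u x) ∧
      (∀ x : V, T.wdist w v x = G.wdist w v x) := by
  have hw a b (hab : G.Adj a b) := (hpos a b hab).le
  choose n hn_mem hn_near using fun x => (hnear x).exists
  refine exists_common_dp_tree_of_proj hG hsymm hpos hP hPshort hn_mem (fun x z hz => ?_)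
    fun x y hxy => ?_
  · rw [wdist_comm hsymm, hn_near, wdist_comm hsymm]
    exact wdistS_le_wdist hw x hz
  · obtain ⟨i, hix, hi⟩ := Walk.mem_support_iff_exists_getVert.mp (hn_mem x)
    obtain ⟨j, hjy, hj⟩ := Walk.mem_support_iff_exists_getVert.mp (hn_mem y)
    have hxi : x ∈ Vset G w P i := by rw [Vset, Set.mem_ofPred_eq, hix, hn_near]
    have hyj : y ∈ Vset G w P j := by rw [Vset, Set.mem_ofPred_eq, hjy, hn_near]
    have h := (abs_le.mp (hedge i j hi hj x y hxy hxi hyj).2).1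
    rw [hix, hjy] at h
    linarith

/-- **Sufficiency.** If (1) the shortest `u`-`v` path `P` in `G` is unique, (2) every vertex
has a unique nearest vertex on `P`, and (3) every edge `xy` with `x ∈ V_i`, `y ∈ V_j`
satisfies `w(e) ≥ d_G(v_i, v_j)` and `|d_G(v_i,x) − d_G(v_j,y)| ≤ w(e) − d_G(v_i,v_j)`,
then `G` has a common distance-preserving spanning tree of `u` and `v`. -/
theorem exists_common_dp_tree {V : Type*} [Fintype V] (G : SimpleGraph V)
    (hG : G.Connected) (w : V → V → ℝ) (hsymm : ∀ a b : V, w a b = w b a)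
    (hpos : ∀ a b : V, G.Adj a b → 0 < w a b) (u v : V)
    (P : G.Walk u v) (hP : P.IsPath) (hPshort : P.wlength w = G.wdist w u v)
    (hPuniq : ∀ Q : G.Walk u v, Q.IsPath → Q.wlength w = G.wdist w u v → Q = P)
    (hnear : ∀ x : V, ∃! y : V, y ∈ P.support ∧
      G.wdist w x y = G.wdistS w x {z | z ∈ P.support})
    (hedge : ∀ i j : ℕ, i ≤ P.length → j ≤ P.length → ∀ x y : V, G.Adj x y →
      x ∈ Vset G w P i → y ∈ Vset G w P j →
      w x y ≥ G.wdist w (P.getVert i) (P.getVert j) ∧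
        |G.wdist w (P.getVert i) x - G.wdist w (P.getVert j) y| ≤
          w x y - G.wdist w (P.getVert i) (P.getVert j)) :
    ∃ T : SimpleGraph V, T ≤ G ∧ T.IsTree ∧
      (∀ x : V, T.wdist w u x = G.wdist w u x) ∧
      (∀ x : V, T.wdist w v x = G.wdist w v x) :=
  exists_common_dp_tree_general G hG w hsymm hpos u v P hP hPshort hnear hedge
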